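/- Let k > 0 and let ψ : ℝ → ℝ³ be the logarithmic spiral in the (x,z)-plane, ψ(s) = (e^{k s} cos s, 0, e^{k s} sin s). Let t ≥ 0, let v = ψ(0) + (0, t, 0), and let w = ψ(r) for some r ≥ 0 with w ≠ ψ(0) or t > 0 (i.e., v ≠ w). Then (t + ∫_0^r ‖ψ'(u)‖ du) / ‖v − w‖ ≤ √(2k² + 1) / k. -/

import Mathlib

/-!
Since `‖ψ'(u)‖ = √(k² + 1) e^{ku}`, the arc has length `√(k² + 1) (e^{kr} - 1) / k`. As
`‖ψ(r)‖ = e^{kr}`, the chord satisfies `‖ψ(0) - ψ(r)‖ ≥ e^{kr} - 1`, and the segment from `v` to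
`ψ(0)` is orthogonal to the spiral's plane, so `‖v - w‖² ≥ t² + (e^{kr} - 1)²`. Cauchy–Schwarz
for `(k, √(k² + 1)) · (t, e^{kr} - 1)` then bounds `k` times the path length by
`√(2k² + 1) ‖v - w‖`.
-/

open Real

noncomputable def logSpiral (k s : ℝ) : EuclideanSpace ℝ (Fin 3) :=
  (WithLp.equiv 2 (Fin 3 → ℝ)).symm ![exp (k * s) * cos s, 0, exp (k * s) * sin s]

lemma EuclideanSpace.norm_equiv_symm_fin_three (a b c : ℝ) :
    ‖(WithLp.equiv 2 (Fin 3 → ℝ)).symm ![a, b, c]‖ = √(a ^ 2 + b ^ 2 + c ^ 2) := by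
  simp [EuclideanSpace.norm_eq, Fin.sum_univ_three, add_assoc]

lemma mul_add_mul_le_sqrt_mul_sqrt (a b x y : ℝ) :
    a * x + b * y ≤ √(a ^ 2 + b ^ 2) * √(x ^ 2 + y ^ 2) := by
  simpa [Fin.sum_univ_two] using Real.sum_mul_le_sqrt_mul_sqrt Finset.univ ![a, b] ![x, y]

lemma hasDerivAt_logSpiral (k u : ℝ) :
    HasDerivAt (logSpiral k) ((WithLp.equiv 2 (Fin 3 → ℝ)).symm
      ![exp (k * u) * (k * cos u - sin u), 0, exp (k * u) * (k * sin u + cos u)]) u := by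
  have hexp : HasDerivAt (fun s => exp (k * s)) (exp (k * u) * k) u :=
    ((hasDerivAt_id u).const_mul k).exp.congr_deriv (by simp)
  refine (EuclideanSpace.equiv (Fin 3) ℝ).symm.toContinuousLinearMap.hasFDerivAt.comp_hasDerivAt
    u (hasDerivAt_pi.2 fun i => ?_)
  fin_cases i
  · exact (hexp.mul (hasDerivAt_cos u)).congr_deriv (by simp; ring)
  · exact hasDerivAt_const u 0
  · exact (hexp.mul (hasDerivAt_sin u)).congr_deriv (by simp; ring)

lemma norm_deriv_logSpiral (k u : ℝ) :
    ‖deriv (logSpiral k) u‖ = √(k ^ 2 + 1) * exp (k * u) := by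
  have hsq : (exp (k * u) * (k * cos u - sin u)) ^ 2 + 0 ^ 2
      + (exp (k * u) * (k * sin u + cos u)) ^ 2 = (k ^ 2 + 1) * exp (k * u) ^ 2 := by
    linear_combination exp (k * u) ^ 2 * (k ^ 2 + 1) * sin_sq_add_cos_sq u
  rw [(hasDerivAt_logSpiral k u).deriv, EuclideanSpace.norm_equiv_symm_fin_three, hsq,
    sqrt_mul (by positivity), sqrt_sq (exp_pos _).le]

lemma integral_norm_deriv_logSpiral {k : ℝ} (hk : k ≠ 0) (r : ℝ) :
    ∫ u in (0 : ℝ)..r, ‖deriv (logSpiral k) u‖ = √(k ^ 2 + 1) * (exp (k * r) - 1) / k := by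
  simp_rw [norm_deriv_logSpiral, intervalIntegral.integral_const_mul,
    intervalIntegral.integral_comp_mul_left (fun x => exp x) hk, integral_exp]
  simp only [mul_zero, exp_zero, smul_eq_mul]
  field_simp

lemma norm_perp_sub_logSpiral_sq (k t r : ℝ) :
    ‖logSpiral k 0 + (WithLp.equiv 2 (Fin 3 → ℝ)).symm ![0, t, 0] - logSpiral k r‖ ^ 2
      = (1 - exp (k * r) * cos r) ^ 2 + t ^ 2 + (exp (k * r) * sin r) ^ 2 := by
  have hvec : logSpiral k 0 + (WithLp.equiv 2 (Fin 3 → ℝ)).symm ![0, t, 0] - logSpiral k r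
      = (WithLp.equiv 2 (Fin 3 → ℝ)).symm
          ![1 - exp (k * r) * cos r, t, -(exp (k * r) * sin r)] := by
    ext i
    fin_cases i <;> simp [logSpiral]
  rw [hvec, EuclideanSpace.norm_equiv_symm_fin_three, sq_sqrt (by positivity), neg_sq]

lemma sub_one_sq_le_chord_sq {E : ℝ} (hE : 0 ≤ E) (r : ℝ) :
    (E - 1) ^ 2 ≤ (1 - E * cos r) ^ 2 + (E * sin r) ^ 2 := by
  nlinarith [sin_sq_add_cos_sq r, mul_nonneg hE (sub_nonneg.2 (cos_le_one r))]

theorem spiral_perp_line_estimate_general (k : ℝ) (hk : 0 < k)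
    (ψ : ℝ → EuclideanSpace ℝ (Fin 3))
    (hψ : ψ = fun s => (WithLp.equiv 2 (Fin 3 → ℝ)).symm
      ![Real.exp (k * s) * Real.cos s, 0, Real.exp (k * s) * Real.sin s])
    (t r : ℝ)
    (v w : EuclideanSpace ℝ (Fin 3))
    (hv : v = ψ 0 + (WithLp.equiv 2 (Fin 3 → ℝ)).symm ![0, t, 0])
    (hw : w = ψ r) :
    (t + ∫ u in (0:ℝ)..r, ‖deriv ψ u‖) / ‖v - w‖ ≤
      Real.sqrt (2 * k ^ 2 + 1) / k := by
  change ψ = logSpiral k at hψ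
  subst hψ hv hw
  have hdist : √(t ^ 2 + (exp (k * r) - 1) ^ 2)
      ≤ ‖logSpiral k 0 + (WithLp.equiv 2 (Fin 3 → ℝ)).symm ![0, t, 0] - logSpiral k r‖ := by
    rw [← sqrt_sq (norm_nonneg _), norm_perp_sub_logSpiral_sq]
    exact sqrt_le_sqrt (by linarith [sub_one_sq_le_chord_sq (exp_pos (k * r)).le r])
  have hk2 : k ^ 2 + √(k ^ 2 + 1) ^ 2 = 2 * k ^ 2 + 1 := by
    rw [sq_sqrt (by positivity)]; ring
  refine div_le_of_le_mul₀ (norm_nonneg _) (by positivity) ?_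
  calc t + ∫ u in (0:ℝ)..r, ‖deriv (logSpiral k) u‖
      = (k * t + √(k ^ 2 + 1) * (exp (k * r) - 1)) / k := by
        rw [integral_norm_deriv_logSpiral hk.ne']; field_simp
    _ ≤ √(k ^ 2 + √(k ^ 2 + 1) ^ 2) * √(t ^ 2 + (exp (k * r) - 1) ^ 2) / k := by
        gcongr; exact mul_add_mul_le_sqrt_mul_sqrt _ _ _ _
    _ ≤ _ := by rw [hk2, div_mul_eq_mul_div]; gcongr

/-- Case 2 estimate for the logarithmic spiral in the `(x,z)`-plane of `ℝ³`:
if `v = ψ(0) + (0, t, 0)` with `t ≥ 0` lies on the perpendicular line through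
`ψ(0) = (1,0,0)` and `w = ψ(r)` with `r ≥ 0`, `v ≠ w`, then the ratio of the
path length `t + ∫_0^r ‖ψ'‖` to the Euclidean distance `‖v − w‖` is at most
`√(2k² + 1)/k`. -/
theorem spiral_perp_line_estimate (k : ℝ) (hk : 0 < k)
    (ψ : ℝ → EuclideanSpace ℝ (Fin 3))
    (hψ : ψ = fun s => (WithLp.equiv 2 (Fin 3 → ℝ)).symm
      ![Real.exp (k * s) * Real.cos s, 0, Real.exp (k * s) * Real.sin s])
    (t r : ℝ) (ht : 0 ≤ t) (hr : 0 ≤ r)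
    (v w : EuclideanSpace ℝ (Fin 3))
    (hv : v = ψ 0 + (WithLp.equiv 2 (Fin 3 → ℝ)).symm ![0, t, 0])
    (hw : w = ψ r) (hvw : v ≠ w) :
    (t + ∫ u in (0:ℝ)..r, ‖deriv ψ u‖) / ‖v - w‖ ≤
      Real.sqrt (2 * k ^ 2 + 1) / k :=
  spiral_perp_line_estimate_general k hk ψ hψ t r v w hv hw
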